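/- Let n ≥ 2 and let A be a real symmetric n × n matrix. Set t = trace A and s = ∑_{i,j} (A i j)^2. Then t * (A 0 0) − ∑_j (A 0 j)^2 ≥ ((n−1)/n) * ( 2t²/n − s − (n−2) * √( (t²/n) * (s − t²/n) / (n−1) ) ). -/

import Mathlib

/-!
Write `a = A₀₀` and `b = ∑_{j ≠ 0} A₀ⱼ²`. By symmetry every off-diagonal entry of row 0 is counted
twice in `s`, so `s ≥ a² + 2b + ∑_{i ≠ 0} Aᵢᵢ²`, and Cauchy–Schwarz on the remaining diagonal gives
`(t - a)² ≤ (n - 1)(s - a² - 2b)`. What is left is a scalar inequality: with `R` the square root,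
`n²` times the difference of the two sides equals
`n((n - 1)(s - a²) - (t - a)² - n b) + (n - 2)(n(n - 1)R - t(t - n a))`,
and the second term is nonnegative because
`(n - 1)(n s - t²) - (t - n a)² = n((n - 1)(s - a²) - (t - a)²)`.
-/

open Finset

noncomputable def hinevaBound (m t s : ℝ) : ℝ :=
  ((m - 1) / m) * (2 * t ^ 2 / m - s - (m - 2) * √((t ^ 2 / m) * (s - t ^ 2 / m) / (m - 1)))

section Scalar

variable {m t s a : ℝ}

lemma mul_sub_le_sqrt (hm : 1 < m) (h : (t - a) ^ 2 ≤ (m - 1) * (s - a ^ 2)) :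
    t * (t - m * a) ≤ m * (m - 1) * √((t ^ 2 / m) * (s - t ^ 2 / m) / (m - 1)) := by
  have hm0 : 0 < m := by linarith
  have hm1 : 0 < m - 1 := by linarith
  have hid : (m - 1) * (m * s - t ^ 2) - (t - m * a) ^ 2
      = m * ((m - 1) * (s - a ^ 2) - (t - a) ^ 2) := by ring
  have hsq : (t - m * a) ^ 2 ≤ (m - 1) * (m * s - t ^ 2) := by
    rw [← sub_nonneg, hid]; exact mul_nonneg hm0.le (sub_nonneg.2 h)
  have harg : 0 ≤ (t ^ 2 / m) * (s - t ^ 2 / m) / (m - 1) := by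
    have : 0 ≤ s - t ^ 2 / m := by
      rw [sub_nonneg, div_le_iff₀ hm0]; nlinarith [sq_nonneg (t - m * a)]
    positivity
  refine (le_abs_self _).trans (abs_le_of_sq_le_sq ?_ (by positivity))
  calc (t * (t - m * a)) ^ 2 = t ^ 2 * (t - m * a) ^ 2 := by ring
    _ ≤ t ^ 2 * ((m - 1) * (m * s - t ^ 2)) := by gcongr
    _ = (m * (m - 1) * √((t ^ 2 / m) * (s - t ^ 2 / m) / (m - 1))) ^ 2 := by
      rw [mul_pow, Real.sq_sqrt harg]; field_simp

lemma hinevaBound_le {b : ℝ} (hm : 2 ≤ m) (hb : 0 ≤ b)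
    (h : (t - a) ^ 2 ≤ (m - 1) * (s - a ^ 2 - 2 * b)) :
    hinevaBound m t s ≤ t * a - (a ^ 2 + b) := by
  have hm0 : 0 < m := by linarith
  have hm1 : 0 < m - 1 := by linarith
  set R := √((t ^ 2 / m) * (s - t ^ 2 / m) / (m - 1)) with hR_def
  have hR : t * (t - m * a) ≤ m * (m - 1) * R :=
    mul_sub_le_sqrt (by linarith) (by nlinarith [mul_nonneg hm1.le hb])
  have hY : 0 ≤ (m - 1) * (s - a ^ 2) - (t - a) ^ 2 - m * b := by
    nlinarith [mul_nonneg (sub_nonneg.2 hm) hb]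
  have hdiff : t * a - (a ^ 2 + b) - hinevaBound m t s
      = (m * ((m - 1) * (s - a ^ 2) - (t - a) ^ 2 - m * b)
          + (m - 2) * (m * (m - 1) * R - t * (t - m * a))) / m ^ 2 := by
    rw [hinevaBound, ← hR_def]; field_simp; ring
  have : 0 ≤ (m - 2) * (m * (m - 1) * R - t * (t - m * a)) :=
    mul_nonneg (by linarith) (by linarith)
  rw [← sub_nonneg, hdiff]
  positivity

end Scalar

namespace Matrix.IsSymm

variable {ι : Type*} [Fintype ι] [DecidableEq ι] {A : Matrix ι ι ℝ}

lemma sq_add_two_mul_sum_sq_row_add_sum_sq_diag_le (hA : A.IsSymm) (k : ι) :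
    A k k ^ 2 + 2 * ∑ j ∈ univ.erase k, A k j ^ 2 + ∑ i ∈ univ.erase k, A i i ^ 2
      ≤ ∑ i, ∑ j, A i j ^ 2 := by
  have hrow : ∀ i ∈ univ.erase k, A k i ^ 2 + A i i ^ 2 ≤ ∑ j, A i j ^ 2 := by
    intro i hi
    rw [← hA.apply k i, ← sum_pair (f := fun j => A i j ^ 2) (ne_of_mem_erase hi).symm]
    exact sum_le_sum_of_subset_of_nonneg (subset_univ _) fun j _ _ => sq_nonneg _
  have hrows := sum_le_sum hrow
  rw [sum_add_distrib] at hrows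
  rw [← add_sum_erase _ _ (mem_univ k), ← add_sum_erase _ _ (mem_univ k)]
  linarith

lemma sq_trace_sub_le (hA : A.IsSymm) (k : ι) :
    (A.trace - A k k) ^ 2
      ≤ (Fintype.card ι - 1) * (∑ i, ∑ j, A i j ^ 2 - A k k ^ 2 - 2 * ∑ j ∈ univ.erase k, A k j ^ 2) := by
  have hcard : ((univ.erase k).card : ℝ) = Fintype.card ι - 1 := by
    rw [← card_univ, ← card_erase_add_one (mem_univ k)]; push_cast; ring
  have htrace : A.trace - A k k = ∑ i ∈ univ.erase k, A i i := by
    rw [trace, ← add_sum_erase _ _ (mem_univ k)]; simp only [diag_apply]; ring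
  have hcs := sq_sum_le_card_mul_sum_sq (s := univ.erase k) (f := fun i => A i i)
  rw [hcard] at hcs
  rw [htrace]
  refine hcs.trans (mul_le_mul_of_nonneg_left ?_ (by rw [← hcard]; positivity))
  linarith [hA.sq_add_two_mul_sum_sq_row_add_sum_sq_diag_le k]

end Matrix.IsSymm

theorem stmt_6 (n : ℕ) (hn : 2 ≤ n) (A : Matrix (Fin n) (Fin n) ℝ) (hA : A.IsSymm)
    (t s : ℝ) (ht : t = Matrix.trace A) (hs : s = ∑ i, ∑ j, (A i j) ^ 2) :
    t * A ⟨0, by omega⟩ ⟨0, by omega⟩ - ∑ j, (A ⟨0, by omega⟩ j) ^ 2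
      ≥ (((n : ℝ) - 1) / n) *
          (2 * t ^ 2 / n - s -
            ((n : ℝ) - 2) * Real.sqrt ((t ^ 2 / n) * (s - t ^ 2 / n) / ((n : ℝ) - 1))) := by
  set k : Fin n := ⟨0, by omega⟩
  rw [← add_sum_erase _ _ (mem_univ k)]
  refine hinevaBound_le (by exact_mod_cast hn) (sum_nonneg fun j _ => sq_nonneg (A k j)) ?_
  simpa [ht, hs] using hA.sq_trace_sub_le k
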